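/- arXiv:1010.3182 — 4 statements merged into one kernel-verified Lean document; each statement's English description precedes it below -/
import Mathlib

section
/- Let g be a finite-dimensional Lie algebra over an algebraically closed field of characteristic 0 and let (e, h, f) be an sl2-triple in g (i.e. [h,e] = 2e, [h,f] = -2f, [e,f] = h). Then g decomposes as a direct sum of vector spaces g = [e, g] ⊕ ker(ad f), i.e. the image of ad(e) and the kernel of ad(f) intersect trivially and span g. -/
/-!
Through `ad`, `g` is a finite-dimensional `sl₂`-module, and `M = range E ⊕ ker F` holds for every
such module `M`, where `E, F, H` are the actions of `e, f, h`.

The subspace `range E ⊓ ker F` is `H`-stable, so if it is nonzero it contains an `H`-eigenvector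
`v`. Being killed by `F`, `v` is a lowest weight vector, hence has weight `-n` with `n : ℕ`. Now
`F` acts nilpotently (it lowers generalized `H`-weights by `2`), so `v = E w` with `F^(m+1) w = 0`
for some `m`; the commutation formula for `E F^(m+1)` then shows that
`(-n - 2 - m)⁻¹ • (H w - m w)` is another preimage of `v` under `E`, killed by `F^m`. Descending
on `m` gives `v = 0`.

The triple `(-h, f, e)` gives `range F ⊓ ker E = ⊥` as well, and rank–nullity for `E` and `F`
turns the two disjointness statements into complementarity.
-/

open LieModule Module Module.End LinearMap

namespace LinearMap

variable {K V W : Type*} [Field K] [AddCommGroup V] [Module K V] [FiniteDimensional K V]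
  [AddCommGroup W] [Module K W] [FiniteDimensional K W]

lemma isCompl_range_ker_of_disjoint {E : V →ₗ[K] W} {F : W →ₗ[K] V}
    (hEF : Disjoint (range E) (ker F)) (hFE : Disjoint (range F) (ker E)) :
    IsCompl (range E) (ker F) := by
  refine (Submodule.isCompl_iff_disjoint _ _ ?_).mpr hEF
  have := finrank_range_add_finrank_ker E
  have := finrank_range_add_finrank_ker F
  have := Submodule.finrank_add_finrank_le_of_disjoint hFE
  omega

end LinearMap

namespace IsSl2Triple

section CommRing

variable {R L M : Type*} [CommRing R] [LieRing L] [LieAlgebra R L]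
  [AddCommGroup M] [Module R M] [LieRingModule L M] [LieModule R L M] {h e f : L}

lemma lie_e_pow_succ_toEnd_f_apply (t : IsSl2Triple h e f) (m : M) (n : ℕ) :
    ⁅e, (toEnd R L M f ^ (n + 1)) m⁆ = (toEnd R L M f ^ (n + 1)) ⁅e, m⁆ +
      ((n : R) + 1) • (toEnd R L M f ^ n) (⁅h, m⁆ - (n : R) • m) := by
  have hef (x : M) : ⁅e, ⁅f, x⁆⁆ = ⁅f, ⁅e, x⁆⁆ + ⁅h, x⁆ := by
    rw [leibniz_lie e f x, t.lie_e_f, add_comm]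
  have hhf (x : M) : ⁅h, ⁅f, x⁆⁆ = ⁅f, ⁅h, x⁆⁆ - (2 : R) • ⁅f, x⁆ := by
    rw [leibniz_lie h f x, t.lie_lie_smul_f R, neg_lie, smul_lie]; abel
  induction n generalizing m with
  | zero => simp [hef]
  | succ n ih =>
    rw [pow_succ, mul_apply, toEnd_apply_apply, ih, hef, hhf, ← toEnd_apply_apply R,
      ← toEnd_apply_apply R L M f ⁅h, m⁆, ← toEnd_apply_apply R L M f m]
    simp only [map_add, map_sub, map_smul, ← mul_apply, ← pow_succ]
    push_cast
    module

lemma toEnd_f_mapsTo_maxGenEigenspace (t : IsSl2Triple h e f) (μ : R) :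
    Set.MapsTo (toEnd R L M f) (maxGenEigenspace (toEnd R L M h) μ)
      (maxGenEigenspace (toEnd R L M h) (μ - 2)) := by
  have hsemi : SemiconjBy (toEnd R L M f) (toEnd R L M h - μ • 1)
      (toEnd R L M h - (μ - 2) • 1) := by
    ext x
    simp only [mul_apply, LinearMap.sub_apply, LinearMap.smul_apply, one_apply,
      toEnd_apply_apply, leibniz_lie h f x, t.lie_lie_smul_f R, neg_lie, smul_lie, lie_sub,
      lie_smul]
    module
  intro m hm
  obtain ⟨k, hk⟩ := (mem_maxGenEigenspace _ _ _).mp hm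
  exact (mem_maxGenEigenspace _ _ _).mpr
    ⟨k, by rw [← mul_apply, ← (hsemi.pow_right k).eq, mul_apply, hk, map_zero]⟩

end CommRing

section Field

variable {K L M : Type*} [Field K] [CharZero K] [LieRing L] [LieAlgebra K L]
  [AddCommGroup M] [Module K M] [LieRingModule L M] [LieModule K L M] {h e f : L}

lemma maxGenEigenspace_toEnd_f_zero_eq_top [FiniteDimensional K M] [IsTriangularizable K L M]
    (t : IsSl2Triple h e f) :
    maxGenEigenspace (toEnd K L M f) 0 = ⊤ := by
  rw [eq_top_iff, ← IsTriangularizable.maxGenEigenspace_eq_top (R := K) (L := L) (M := M) h,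
    iSup_le_iff]
  intro μ m hm
  have hshift (n : ℕ) : Set.MapsTo (toEnd K L M f ^ n) (maxGenEigenspace (toEnd K L M h) μ)
      (maxGenEigenspace (toEnd K L M h) (μ - 2 * n)) := by
    induction n with
    | zero => intro x hx; simpa using hx
    | succ n ih =>
      convert (t.toEnd_f_mapsTo_maxGenEigenspace _).comp ih using 2
      · rw [pow_succ', coe_mul]
      · congr 1; push_cast; ring
  obtain ⟨n, hn⟩ : ∃ n : ℕ, maxGenEigenspace (toEnd K L M h) (μ - 2 * n) = ⊥ := by
    have hfin := WellFoundedGT.finite_ne_bot_of_iSupIndep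
      (toEnd K L M h).independent_maxGenEigenspace
    have hinj : Function.Injective (fun n : ℕ ↦ μ - 2 * n) := fun a b hab ↦ by simpa using hab
    simpa using (hfin.preimage hinj.injOn).exists_notMem
  have := hshift n hm
  rw [hn, SetLike.mem_coe, Submodule.mem_bot] at this
  exact (mem_maxGenEigenspace _ _ _).mpr ⟨n, by simpa using this⟩

lemma eq_zero_of_lie_e_eq_of_pow_toEnd_f_eq_zero (t : IsSl2Triple h e f) {v w : M} {μ : K}
    (hμ : ∀ k : ℕ, μ ≠ k + 2) (hfv : ⁅f, v⁆ = 0) (hhv : ⁅h, v⁆ = μ • v) {m : ℕ}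
    (hw : ⁅e, w⁆ = v) (hfw : (toEnd K L M f ^ m) w = 0) : v = 0 := by
  induction m generalizing w with
  | zero => rw [← hw, show w = 0 from hfw, lie_zero]
  | succ m ih =>
    have hc : μ - 2 - m ≠ 0 := fun h0 ↦ hμ m (by linear_combination h0)
    have hkey : (toEnd K L M f ^ m) (⁅h, w⁆ - (m : K) • w) = 0 := by
      have := t.lie_e_pow_succ_toEnd_f_apply (R := K) w m
      rw [hfw, lie_zero, hw, pow_succ, mul_apply, toEnd_apply_apply, hfv, map_zero, zero_add,
        eq_comm, smul_eq_zero] at this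
      exact this.resolve_left (Nat.cast_add_one_ne_zero m)
    refine ih (w := (μ - 2 - m)⁻¹ • (⁅h, w⁆ - (m : K) • w)) ?_
      (by rw [map_smul, hkey, smul_zero])
    have heh : ⁅e, ⁅h, w⁆⁆ = (μ - 2) • v := by
      rw [sub_smul, ← hhv, ← hw, leibniz_lie h e w, t.lie_h_e_smul K, smul_lie]
      abel
    rw [lie_smul, lie_sub, lie_smul, heh, hw, ← sub_smul, smul_smul, inv_mul_cancel₀ hc, one_smul]

lemma disjoint_range_toEnd_e_ker_toEnd_f [IsAlgClosed K] [FiniteDimensional K M]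
    (t : IsSl2Triple h e f) :
    Disjoint (range (toEnd K L M e)) (ker (toEnd K L M f)) := by
  set N := range (toEnd K L M e) ⊓ ker (toEnd K L M f)
  have hN : ∀ x ∈ N, toEnd K L M h x ∈ N := by
    rintro _ ⟨⟨w, rfl⟩, hfx⟩
    refine ⟨⟨⁅h, w⁆ + (2 : K) • w, ?_⟩, ?_⟩
    · simp only [toEnd_apply_apply, leibniz_lie h e w, t.lie_h_e_smul K, smul_lie, lie_add,
        lie_smul, add_comm]
    · simp only [SetLike.mem_coe, mem_ker, toEnd_apply_apply] at hfx ⊢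
      rw [leibniz_lie f h, ← lie_skew f h, t.lie_lie_smul_f K]
      simp [hfx]
  rw [disjoint_iff]
  by_contra hN0
  have : Nontrivial N := Submodule.nontrivial_iff_ne_bot.mpr hN0
  obtain ⟨μ, hμ⟩ := exists_eigenvalue ((toEnd K L M h).restrict hN)
  obtain ⟨⟨v, ⟨w, hw⟩, hfv⟩, hv⟩ := hμ.exists_hasEigenvector
  have hv0 : v ≠ 0 := fun h0 ↦ hv.2 (Subtype.ext h0)
  have hhv : ⁅h, v⁆ = μ • v := congr_arg Subtype.val hv.apply_eq_smul
  have hprim : HasPrimitiveVectorWith t.symm v (-μ) := ⟨hv0, by rw [neg_lie, hhv, neg_smul], hfv⟩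
  obtain ⟨n, hn⟩ := hprim.exists_nat
  have hfw : w ∈ maxGenEigenspace (toEnd K L M f) 0 := by
    rw [t.maxGenEigenspace_toEnd_f_zero_eq_top]; trivial
  obtain ⟨m, hm⟩ := (mem_maxGenEigenspace _ _ _).mp hfw
  refine hv0 (t.eq_zero_of_lie_e_eq_of_pow_toEnd_f_eq_zero (fun k hk ↦ ?_) hfv hhv hw
    (by simpa using hm))
  have : ((n + k + 2 : ℕ) : K) = 0 := by push_cast; linear_combination -hn - hk
  exact absurd (Nat.cast_eq_zero.mp this) (by omega)

lemma isCompl_range_toEnd_e_ker_toEnd_f [IsAlgClosed K] [FiniteDimensional K M]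
    (t : IsSl2Triple h e f) :
    IsCompl (range (toEnd K L M e)) (ker (toEnd K L M f)) :=
  isCompl_range_ker_of_disjoint t.disjoint_range_toEnd_e_ker_toEnd_f
    t.symm.disjoint_range_toEnd_e_ker_toEnd_f

end Field

end IsSl2Triple

/-- For an sl2-triple (e,h,f) in a finite-dimensional Lie algebra over an algebraically
closed field of characteristic 0, the Lie algebra decomposes as
g = [e, g] ⊕ ker(ad f). -/
theorem stmt_0 {K : Type*} [Field K] [IsAlgClosed K] [CharZero K]
    {L : Type*} [LieRing L] [LieAlgebra K L] [Module.Finite K L]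
    (e h f : L)
    (hhe : ⁅h, e⁆ = (2 : K) • e) (hhf : ⁅h, f⁆ = (-2 : K) • f) (hef : ⁅e, f⁆ = h) :
    IsCompl (LinearMap.range (LieAlgebra.ad K L e)) (LinearMap.ker (LieAlgebra.ad K L f)) := by
  rcases eq_or_ne h 0 with rfl | hh
  · have he : e = 0 := by simpa using hhe.symm
    have hf : f = 0 := by simpa using hhf.symm
    subst he hf
    simpa using isCompl_bot_top
  have t : IsSl2Triple h e f :=
    { h_ne_zero := hh
      lie_e_f := hef
      lie_h_e_nsmul := by rw [hhe, ofNat_smul_eq_nsmul]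
      lie_h_f_nsmul := by rw [hhf, neg_smul, ofNat_smul_eq_nsmul] }
  exact t.isCompl_range_toEnd_e_ker_toEnd_f (K := K) (M := L)
end

section
/- Let (·,·) be the Cartan pairing of type A_{n-1}: (x,y) = Σ_{i=1}^{n-1} x_i(2y_i − y_{i-1} − y_{i+1}) with y_0 = y_n = 0. Suppose d, v ∈ Z_{≥0}^{n-1} are such that d − v is dominant, i.e. (ε_i, d − v) ≥ 0 for all standard basis vectors ε_i (equivalently 2(d_i−v_i) − (d_{i-1}−v_{i-1}) − (d_{i+1}−v_{i+1}) ≥ 0 for all i). Define p(w) := (d, w) − (1/2)(w, w). Then for every v' ∈ Z_{≥0}^{n-1} with v' ≤ v componentwise and v' ≠ v, one has p(v) − p(v') ≥ (1/2)(u, u) > 0, where u := v − v'. -/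
/-!
Summation by parts turns the pairing `(a, b)`, for `a` vanishing at `0` and `n`, into the
discrete Dirichlet form `∑_{i=0}^{n-1} (a_{i+1} - a_i) (b_{i+1} - b_i)`. In this form, with
`u = v - v'`, one reads off `2 (p(v) - p(v')) = (u, u) + 2 (u, d - v)`. The second term is
nonnegative because `u ≥ 0` and `d - v` is dominant, and `(u, u)` is the sum of the squared
increments of `u`, which vanishes only if `u` is constant, hence zero.
-/

/-- The Cartan pairing of type A_{n-1}:
`(a,b) = Σ_{i=1}^{n-1} a_i (2 b_i − b_{i-1} − b_{i+1})` (with boundary values 0). -/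
noncomputable def cartanPairingA (n : ℕ) (a b : ℤ → ℤ) : ℤ :=
  ∑ i ∈ Finset.Icc (1 : ℤ) ((n : ℤ) - 1), a i * (2 * b i - b (i - 1) - b (i + 1))

open Finset

theorem Finset.sum_Icc_add_one {M : Type*} [AddCommMonoid M] (f : ℤ → M) (a b : ℤ) :
    ∑ i ∈ Icc a b, f (i + 1) = ∑ i ∈ Icc (a + 1) (b + 1), f i := by
  rw [← map_add_right_Icc, sum_map]
  rfl

theorem cartanPairingA_eq_sum_sub_mul_sub (n : ℕ) {a : ℤ → ℤ} (b : ℤ → ℤ)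
    (ha₀ : a 0 = 0) (haₙ : a n = 0) :
    cartanPairingA n a b =
      ∑ i ∈ Icc (0 : ℤ) (n - 1), (a (i + 1) - a i) * (b (i + 1) - b i) := by
  have hshift : ∑ i ∈ Icc (0 : ℤ) (n - 1), a (i + 1) * (b (i + 1) - b i) =
      ∑ i ∈ Icc (1 : ℤ) (n - 1), a i * (b i - b (i - 1)) := by
    have h := sum_Icc_add_one (fun i => a i * (b i - b (i - 1))) 0 (n - 1)
    simp only [add_sub_cancel_right, zero_add, sub_add_cancel] at h
    refine h.trans (sum_subset (Icc_subset_Icc_right (by omega)) fun x hx hx' => ?_).symm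
    obtain rfl : x = n := by simp only [mem_Icc] at hx hx'; omega
    simp [haₙ]
  have hdrop : ∑ i ∈ Icc (0 : ℤ) (n - 1), a i * (b (i + 1) - b i) =
      ∑ i ∈ Icc (1 : ℤ) (n - 1), a i * (b (i + 1) - b i) := by
    refine (sum_subset (Icc_subset_Icc_left zero_le_one) fun x hx hx' => ?_).symm
    obtain rfl : x = 0 := by simp only [mem_Icc] at hx hx'; omega
    simp [ha₀]
  calc cartanPairingA n a b
      = ∑ i ∈ Icc (1 : ℤ) (n - 1), a i * (b i - b (i - 1)) -
          ∑ i ∈ Icc (1 : ℤ) (n - 1), a i * (b (i + 1) - b i) := by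
        rw [cartanPairingA, ← sum_sub_distrib]
        exact sum_congr rfl fun i _ => by ring
    _ = _ := by
        rw [← hshift, ← hdrop, ← sum_sub_distrib]
        exact sum_congr rfl fun i _ => by ring

theorem Int.apply_eq_apply_of_add_one_eq {α : Type*} {u : ℤ → α} {a b : ℤ}
    (h : ∀ i, a ≤ i → i < b → u (i + 1) = u i) : ∀ k, a ≤ k → k ≤ b → u k = u a := by
  intro k hak
  induction k, hak using Int.leInduction with
  | base => exact fun _ => rfl
  | succ k hak ih => exact fun hkb => (h k hak (by omega)).trans (ih (by omega))

theorem cartanPairingA_self_pos {n : ℕ} {u : ℤ → ℤ}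
    (hu : ∀ k ∉ Icc (1 : ℤ) (n - 1), u k = 0) (hne : u ≠ 0) : 0 < cartanPairingA n u u := by
  have hu₀ : u 0 = 0 := hu 0 (by simp)
  rw [cartanPairingA_eq_sum_sub_mul_sub n u hu₀ (hu n (by simp))]
  refine (sum_nonneg fun i _ => mul_self_nonneg _).lt_of_ne fun hsum => hne ?_
  have hstep : ∀ i, 0 ≤ i → i < (n : ℤ) → u (i + 1) = u i := fun i h₀ hn =>
    sub_eq_zero.1 <| mul_self_eq_zero.1 <|
      (sum_eq_zero_iff_of_nonneg fun i _ => mul_self_nonneg _).1 hsum.symm i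
        (mem_Icc.2 ⟨h₀, by omega⟩)
  funext k
  by_cases hk : k ∈ Icc (1 : ℤ) (n - 1)
  · rw [mem_Icc] at hk
    rw [Int.apply_eq_apply_of_add_one_eq hstep k (by omega) (by omega), hu₀, Pi.zero_apply]
  · exact hu k hk

theorem cartanPairingA_nonneg {n : ℕ} {a b : ℤ → ℤ} (ha : ∀ k ∈ Icc (1 : ℤ) (n - 1), 0 ≤ a k)
    (hb : ∀ k ∈ Icc (1 : ℤ) (n - 1), 0 ≤ 2 * b k - b (k - 1) - b (k + 1)) :
    0 ≤ cartanPairingA n a b :=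
  sum_nonneg fun k hk => mul_nonneg (ha k hk) (hb k hk)

theorem cartanPairingA_quadratic_difference {n : ℕ} {d v v' : ℤ → ℤ}
    (hd : ∀ k ∉ Icc (1 : ℤ) (n - 1), d k = 0) (hv : ∀ k ∉ Icc (1 : ℤ) (n - 1), v k = 0)
    (hv' : ∀ k ∉ Icc (1 : ℤ) (n - 1), v' k = 0) :
    2 * cartanPairingA n d v - cartanPairingA n v v -
        (2 * cartanPairingA n d v' - cartanPairingA n v' v') =
      cartanPairingA n (fun k => v k - v' k) (fun k => v k - v' k) +
        2 * cartanPairingA n (fun k => v k - v' k) (fun k => d k - v k) := by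
  have hsum {w : ℤ → ℤ} (hw : ∀ k ∉ Icc (1 : ℤ) (n - 1), w k = 0) (b : ℤ → ℤ) :=
    cartanPairingA_eq_sum_sub_mul_sub n b (hw 0 (by simp)) (hw n (by simp))
  have hu : ∀ k ∉ Icc (1 : ℤ) (n - 1), v k - v' k = 0 := fun k hk => by
    rw [hv k hk, hv' k hk, sub_zero]
  simp only [hsum hd, hsum hv, hsum hv', hsum hu, mul_sum, ← sum_sub_distrib, ← sum_add_distrib]
  exact sum_congr rfl fun i _ => by ring

theorem stmt_8_general (n : ℕ) (d v v' : ℤ → ℤ)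
    (hd_supp : ∀ k : ℤ, k ∉ Finset.Icc (1 : ℤ) ((n : ℤ) - 1) → d k = 0)
    (hv_supp : ∀ k : ℤ, k ∉ Finset.Icc (1 : ℤ) ((n : ℤ) - 1) → v k = 0)
    (hv'_supp : ∀ k : ℤ, k ∉ Finset.Icc (1 : ℤ) ((n : ℤ) - 1) → v' k = 0)
    (hdom : ∀ k ∈ Finset.Icc (1 : ℤ) ((n : ℤ) - 1),
      0 ≤ 2 * (d k - v k) - (d (k - 1) - v (k - 1)) - (d (k + 1) - v (k + 1)))
    (hle : ∀ k, v' k ≤ v k) (hne : v' ≠ v) :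
    (0 : ℚ) < (1 / 2 : ℚ) * (cartanPairingA n (fun k => v k - v' k) (fun k => v k - v' k) : ℚ)
    ∧ (1 / 2 : ℚ) * (cartanPairingA n (fun k => v k - v' k) (fun k => v k - v' k) : ℚ)
        ≤ ((cartanPairingA n d v : ℚ) - (1 / 2 : ℚ) * (cartanPairingA n v v : ℚ))
          - ((cartanPairingA n d v' : ℚ) - (1 / 2 : ℚ) * (cartanPairingA n v' v' : ℚ)) := by
  have hu : ∀ k ∉ Icc (1 : ℤ) (n - 1), v k - v' k = 0 := fun k hk => by
    rw [hv_supp k hk, hv'_supp k hk, sub_zero]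
  have hpos := cartanPairingA_self_pos hu fun h => hne <| funext fun k => by
    simpa [sub_eq_zero, eq_comm] using congrFun h k
  have hdom_u : 0 ≤ cartanPairingA n (fun k => v k - v' k) (fun k => d k - v k) :=
    cartanPairingA_nonneg (fun k _ => sub_nonneg.2 (hle k)) hdom
  have hid := congrArg (Int.cast : ℤ → ℚ)
    (cartanPairingA_quadratic_difference hd_supp hv_supp hv'_supp)
  push_cast at hid
  have hdom_q : (0 : ℚ) ≤ _ := Int.cast_nonneg hdom_u
  exact ⟨mul_pos one_half_pos (Int.cast_pos.2 hpos), by linarith⟩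

/-- With `p(w) = (d,w) − (1/2)(w,w)` for the type A Cartan pairing, if `d − v` is
dominant then for every `0 ≤ v' ≤ v` with `v' ≠ v` one has
`p(v) − p(v') ≥ (1/2)(u,u) > 0` where `u = v − v'`. -/
theorem stmt_8 (n : ℕ) (d v v' : ℤ → ℤ)
    (hd_supp : ∀ k : ℤ, k ∉ Finset.Icc (1 : ℤ) ((n : ℤ) - 1) → d k = 0)
    (hv_supp : ∀ k : ℤ, k ∉ Finset.Icc (1 : ℤ) ((n : ℤ) - 1) → v k = 0)
    (hv'_supp : ∀ k : ℤ, k ∉ Finset.Icc (1 : ℤ) ((n : ℤ) - 1) → v' k = 0)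
    (hd_pos : ∀ k, 0 ≤ d k) (hv_pos : ∀ k, 0 ≤ v k) (hv'_pos : ∀ k, 0 ≤ v' k)
    (hdom : ∀ k ∈ Finset.Icc (1 : ℤ) ((n : ℤ) - 1),
      0 ≤ 2 * (d k - v k) - (d (k - 1) - v (k - 1)) - (d (k + 1) - v (k + 1)))
    (hle : ∀ k, v' k ≤ v k) (hne : v' ≠ v) :
    (0 : ℚ) < (1 / 2 : ℚ) * (cartanPairingA n (fun k => v k - v' k) (fun k => v k - v' k) : ℚ)
    ∧ (1 / 2 : ℚ) * (cartanPairingA n (fun k => v k - v' k) (fun k => v k - v' k) : ℚ)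
        ≤ ((cartanPairingA n d v : ℚ) - (1 / 2 : ℚ) * (cartanPairingA n v v : ℚ))
          - ((cartanPairingA n d v' : ℚ) - (1 / 2 : ℚ) * (cartanPairingA n v' v' : ℚ)) :=
  stmt_8_general n d v v' hd_supp hv_supp hv'_supp hdom hle hne
end

section
/- Let D be an associative K[[h]]-algebra, flat and h-adically complete, with D/hD commutative, and let G be a group acting on D by K[[h]]-algebra automorphisms. Suppose Φ: g → D is a linear map from a Lie algebra g such that (1/h)[Φ(ξ), ·] equals the derivation ξ_D induced by the G-action for every ξ ∈ g, and suppose the center of D equals K[[h]]. If σ: D → D is a K[[h]]-semilinear anti-automorphism (with σ(h) = −h) commuting with the G-action in the sense that σ ∘ ξ_D = ξ_D ∘ σ, then for every ξ ∈ g the element σ(Φ(ξ)) − Φ(ξ) lies in the center K[[h]] of D. If moreover σ is the identity modulo h and Φ(ξ) is homogeneous of degree 2 for a grading with deg h = 2, then σ(Φ(ξ)) − Φ(ξ) ∈ K·h. -/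
/-!
Applying `σ` to `[Φ ξ, x] = h · ξ_D x` and using `σ h = -h`, `σ ∘ ξ_D = ξ_D ∘ σ` gives
`[σ (Φ ξ), σ x] = [Φ ξ, σ x]`; as `σ` is onto, `σ (Φ ξ) - Φ ξ` is central, hence a power
series `f` in `h`. If the grading rescales `h` by `t²` and `Φ ξ` by `t²`, and commutes with `σ`,
then `f(t² h) = t² f(h)`, which forces `f` to be a multiple of `h` in characteristic zero.
-/

theorem commute_map_sub_self_of_commutator_eq_mul {D : Type*} [Ring D] (σ : D →+ D)
    (hσsurj : Function.Surjective σ) (hσmul : ∀ x y : D, σ (x * y) = σ y * σ x)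
    {h φ : D} {δ : D → D} (hh : ∀ x, h * x = x * h) (hσh : σ h = -h)
    (hφ : ∀ x, φ * x - x * φ = h * δ x) (hσδ : ∀ x, σ (δ x) = δ (σ x)) (y : D) :
    (σ φ - φ) * y = y * (σ φ - φ) := by
  obtain ⟨x, rfl⟩ := hσsurj y
  have hσcomm : σ x * σ φ - σ φ * σ x = σ x * φ - φ * σ x := by
    have := congrArg σ (hφ x)
    rwa [map_sub, hσmul, hσmul, hσmul, hσh, hσδ, mul_neg, ← hh, ← hφ, neg_sub] at this
  rw [sub_mul, mul_sub, ← sub_eq_zero, ← neg_eq_zero, ← sub_eq_zero.mpr hσcomm]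
  abel

theorem map_smul_of_map_mul_of_map_algebraMap {K D : Type*} [CommSemiring K] [Semiring D]
    [Algebra K D] (σ : D →+ D) (hσmul : ∀ x y : D, σ (x * y) = σ y * σ x)
    (hσK : ∀ c : K, σ (algebraMap K D c) = algebraMap K D c) (c : K) (x : D) :
    σ (c • x) = c • σ x := by
  rw [Algebra.smul_def, Algebra.smul_def, hσmul, hσK, Algebra.commutes]

theorem Nat.cast_pow_ne_self {K : Type*} [Semiring K] [CharZero K] {m n : ℕ} (hm : 1 < m)
    (hn : n ≠ 1) : (m : K) ^ n ≠ m := by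
  exact_mod_cast (Nat.pow_eq_self_iff hm).not.mpr hn

namespace PowerSeries

theorem eq_C_mul_X_of_rescale_eq_smul {R : Type*} [CommRing R] [NoZeroDivisors R] {a : R}
    (ha : ∀ n ≠ 1, a ^ n ≠ a) {f : R⟦X⟧} (hf : rescale a f = a • f) :
    f = C (coeff 1 f) * X := by
  ext n
  rw [coeff_C_mul, coeff_X]
  split_ifs with hn
  · rw [hn, mul_one]
  · have hcoeff := congrArg (coeff n) hf
    rw [coeff_rescale, coeff_smul, smul_eq_mul, ← sub_eq_zero, ← sub_mul] at hcoeff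
    rw [mul_zero]
    exact (mul_eq_zero.mp hcoeff).resolve_left (sub_ne_zero.mpr (ha n hn))

end PowerSeries

theorem stmt_17_general {K : Type*} [Field K] [CharZero K]
    {D : Type*} [Ring D] [Algebra (PowerSeries K) D] [Algebra K D]
    [IsScalarTower K (PowerSeries K) D]
    {L : Type*} [LieRing L] [LieAlgebra K L]
    (hD : D) (hDdef : hD = algebraMap (PowerSeries K) D PowerSeries.X)
    (hflat : Module.Flat (PowerSeries K) D)
    -- the G-action and its derivations ξ_D
    (xiD : L → D → D)
    -- the quantum comoment map Φ
    (Φ : L →ₗ[K] D)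
    (hquant : ∀ (ξ : L) (x : D), Φ ξ * x - x * Φ ξ = hD * xiD ξ x)
    -- the center of D is K[[h]]
    (hcenter : ∀ z : D, (∀ x : D, z * x = x * z) →
      ∃ c : PowerSeries K, z = algebraMap (PowerSeries K) D c)
    -- the anti-automorphism σ
    (σ : D → D) (hσbij : Function.Bijective σ)
    (hσadd : ∀ x y : D, σ (x + y) = σ x + σ y)
    (hσmul : ∀ x y : D, σ (x * y) = σ y * σ x)
    (hσh : σ hD = -hD)
    (hσK : ∀ c : K, σ (algebraMap K D c) = algebraMap K D c)
    (hσequiv : ∀ (ξ : L) (x : D), σ (xiD ξ x) = xiD ξ (σ x)) :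
    (∀ ξ : L, ∃ c : PowerSeries K, σ (Φ ξ) - Φ ξ = algebraMap (PowerSeries K) D c)
    ∧ (∀ θ : Kˣ → (D ≃+* D),
        (∀ (t : Kˣ) (f : PowerSeries K),
          θ t (algebraMap (PowerSeries K) D f)
            = algebraMap (PowerSeries K) D (PowerSeries.rescale ((t : K) ^ 2) f)) →
        (∀ (t : Kˣ) (ξ : L), θ t (Φ ξ) = ((t : K) ^ 2) • Φ ξ) →
        (∀ x : D, σ x - x ∈ Ideal.span {hD}) →
        (∀ (t : Kˣ) (x : D), θ t (σ x) = σ (θ t x)) →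
        ∀ ξ : L, ∃ c : K, σ (Φ ξ) - Φ ξ = algebraMap K D c * hD) := by
  let S : D →+ D := AddMonoidHom.mk' σ hσadd
  have hDcentral : ∀ x : D, hD * x = x * hD := fun x => hDdef ▸ Algebra.commutes _ x
  have central (ξ : L) : ∃ c : PowerSeries K, σ (Φ ξ) - Φ ξ = algebraMap (PowerSeries K) D c :=
    hcenter _ (commute_map_sub_self_of_commutator_eq_mul S hσbij.2 hσmul hDcentral hσh
      (hquant ξ) (hσequiv ξ))
  refine ⟨central, fun θ hθalg hθΦ _ hθσ ξ => ?_⟩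
  rcases subsingleton_or_nontrivial D with _ | _
  · exact ⟨0, Subsingleton.elim _ _⟩
  obtain ⟨f, hf⟩ := central ξ
  let two : Kˣ := Units.mk0 2 two_ne_zero
  have hrescale : PowerSeries.rescale ((two : K) ^ 2) f = ((two : K) ^ 2) • f := by
    -- flat over the domain `K⟦X⟧` means torsion-free, so the nontrivial `D` is faithful
    apply FaithfulSMul.algebraMap_injective (PowerSeries K) D
    have hσsmul : ∀ (c : K) (x : D), σ (c • x) = c • σ x :=
      map_smul_of_map_mul_of_map_algebraMap S hσmul hσK
    rw [← hθalg, ← hf, map_sub, hθσ, hθΦ, hσsmul, ← smul_sub, hf,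
      ← IsScalarTower.coe_toAlgHom' K, ← map_smul]
  have hfX := PowerSeries.eq_C_mul_X_of_rescale_eq_smul (fun n hn => by
    have h4 : ((two : K) ^ 2) = ((4 : ℕ) : K) := by norm_num [two]
    exact h4 ▸ Nat.cast_pow_ne_self (by norm_num) hn) hrescale
  refine ⟨PowerSeries.coeff 1 f, ?_⟩
  rw [hf, hDdef, IsScalarTower.algebraMap_apply K (PowerSeries K) D, ← map_mul,
    ← PowerSeries.C_eq_algebraMap, ← hfX]

/-- Lemma on quantum comoment maps and parity anti-automorphisms: if `D` is a flat,
complete `K[[h]]`-quantization with commutative `D/hD` and center `K[[h]]`, `Φ` is a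
quantum comoment map for a `G`-action (`[Φ(ξ), x] = h·ξ_D(x)`), and `σ` is a
`K[[h]]`-semilinear anti-automorphism with `σ(h) = −h` commuting with the action
derivations, then `σ(Φ ξ) − Φ ξ` is central, i.e. lies in `K[[h]]`; if moreover `σ` is
the identity modulo `h` and `Φ ξ` is homogeneous of degree 2 for a grading with
`deg h = 2` (expressed by a `K^×`-action `θ`), then `σ(Φ ξ) − Φ ξ ∈ K·h`. -/
theorem stmt_17 {K : Type*} [Field K] [CharZero K]
    {D : Type*} [Ring D] [Algebra (PowerSeries K) D] [Algebra K D]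
    [IsScalarTower K (PowerSeries K) D]
    {L : Type*} [LieRing L] [LieAlgebra K L]
    (hD : D) (hDdef : hD = algebraMap (PowerSeries K) D PowerSeries.X)
    (hflat : Module.Flat (PowerSeries K) D)
    (hcomm : ∀ x y : D, x * y - y * x ∈ Ideal.span {hD})
    -- the G-action and its derivations ξ_D
    {G : Type*} [Group G] (action : G →* (D ≃ₐ[PowerSeries K] D))
    (xiD : L → D → D)
    -- the quantum comoment map Φ
    (Φ : L →ₗ[K] D)
    (hquant : ∀ (ξ : L) (x : D), Φ ξ * x - x * Φ ξ = hD * xiD ξ x)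
    -- the center of D is K[[h]]
    (hcenter : ∀ z : D, (∀ x : D, z * x = x * z) →
      ∃ c : PowerSeries K, z = algebraMap (PowerSeries K) D c)
    -- the anti-automorphism σ
    (σ : D → D) (hσbij : Function.Bijective σ)
    (hσadd : ∀ x y : D, σ (x + y) = σ x + σ y)
    (hσmul : ∀ x y : D, σ (x * y) = σ y * σ x)
    (hσh : σ hD = -hD)
    (hσK : ∀ c : K, σ (algebraMap K D c) = algebraMap K D c)
    (hσequiv : ∀ (ξ : L) (x : D), σ (xiD ξ x) = xiD ξ (σ x)) :
    (∀ ξ : L, ∃ c : PowerSeries K, σ (Φ ξ) - Φ ξ = algebraMap (PowerSeries K) D c)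
    ∧ (∀ θ : Kˣ → (D ≃+* D),
        (∀ (t : Kˣ) (f : PowerSeries K),
          θ t (algebraMap (PowerSeries K) D f)
            = algebraMap (PowerSeries K) D (PowerSeries.rescale ((t : K) ^ 2) f)) →
        (∀ (t : Kˣ) (ξ : L), θ t (Φ ξ) = ((t : K) ^ 2) • Φ ξ) →
        (∀ x : D, σ x - x ∈ Ideal.span {hD}) →
        (∀ (t : Kˣ) (x : D), θ t (σ x) = σ (θ t x)) →
        ∀ ξ : L, ∃ c : K, σ (Φ ξ) - Φ ξ = algebraMap K D c * hD) :=
  stmt_17_general hD hDdef hflat xiD Φ hquant hcenter σ hσbij hσadd hσmul hσh hσK hσequiv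
end

section
/- Let H be an associative algebra with an increasing exhaustive filtration, e ∈ H an idempotent of filtration degree 0, and m ⊂ H a two-sided ideal generated (as a left ideal) by central-like elements: specifically, suppose m is generated as a left H-ideal by a finite set {p_1,...,p_s} ∪ {x_1,...,x_m} where each p_j is central and each x_i satisfies [x_i, H] ⊆ (p_1,...,p_s)H and ex_i = x_ie. Then the two descending filtrations {e m^n e} and {(e m e)^n} on the algebra eHe are cofinal: (e m e)^n ⊆ e m^n e for all n, and for each n there exists N with e m^N e ⊆ (e m e)^n. -/
/-!
Let `T` be the additive span of the generators `p_j, x_i`, so that `m = H·T`. Centrality of the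
`p_j` together with `[x_i, H] ⊆ (p)H` gives `T·H ⊆ H·T`, hence `mⁿ ⊆ H·Tⁿ = m·Tⁿ⁻¹`. Elements of
`T` commute with `e`, so `e(bt)e = (ebe)(ete)` for `t ∈ T`, which yields `e mⁿ e ⊆ (e m e)ⁿ`
(with `N = n`). Conversely `(eae)(ebe) = e(a·eb)e` and `eb ∈ m` give `(e m e)ⁿ ⊆ e mⁿ e`.
-/

namespace LinearMap

variable {R A : Type*} [CommSemiring R] [Semiring A] [Algebra R A]

variable (R) in
def corner (e : A) : A →ₗ[R] A := mulLeft R e ∘ₗ mulRight R e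

@[simp]
theorem corner_apply (e x : A) : corner R e x = e * (x * e) := rfl

variable {e : A}

theorem corner_mul_corner (he : IsIdempotentElem e) (a b : A) :
    corner R e a * corner R e b = corner R e (a * (e * b)) := by
  simp only [corner_apply, mul_assoc, ← mul_assoc e e, he.eq]

theorem corner_mul_of_commute (he : IsIdempotentElem e) (b : A) {t : A} (ht : Commute e t) :
    corner R e (b * t) = corner R e b * corner R e t := by
  simp only [corner_apply, mul_assoc, ← ht.eq, ← mul_assoc e e, he.eq]

end LinearMap

namespace Submodule

open LinearMap (corner corner_mul_corner corner_mul_of_commute)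

variable {R A : Type*} [CommSemiring R] [Semiring A] [Algebra R A] {e : A}

theorem map_corner_mul_map_corner_le (he : IsIdempotentElem e) (P : Submodule R A)
    {Q : Submodule R A} (hQ : ∀ b ∈ Q, e * b ∈ Q) :
    map (corner R e) P * map (corner R e) Q ≤ map (corner R e) (P * Q) := by
  rw [mul_le]
  rintro _ ⟨a, ha, rfl⟩ _ ⟨b, hb, rfl⟩
  rw [corner_mul_corner he]
  exact mem_map_of_mem (mul_mem_mul ha (hQ b hb))

theorem pow_map_corner_le_map_corner_pow (he : IsIdempotentElem e) {M : Submodule R A}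
    (hM : ∀ b ∈ M, e * b ∈ M) {n : ℕ} (hn : 0 < n) :
    map (corner R e) M ^ n ≤ map (corner R e) (M ^ n) := by
  induction n, hn using Nat.le_induction with
  | base => simp only [pow_one, le_refl]
  | succ n _ ih =>
    calc map (corner R e) M ^ (n + 1) = map (corner R e) M ^ n * map (corner R e) M :=
          pow_succ _ _
      _ ≤ map (corner R e) (M ^ n) * map (corner R e) M := mul_le_mul_left ih _
      _ ≤ map (corner R e) (M ^ (n + 1)) := by
        rw [pow_succ]; exact map_corner_mul_map_corner_le he _ hM

theorem map_corner_mul_le (he : IsIdempotentElem e) (P : Submodule R A) {T : Submodule R A}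
    (hT : ∀ t ∈ T, Commute e t) :
    map (corner R e) (P * T) ≤ map (corner R e) P * map (corner R e) T := by
  rw [map_le_iff_le_comap, mul_le]
  intro b hb t ht
  rw [mem_comap, corner_mul_of_commute he b (hT t ht)]
  exact mul_mem_mul (mem_map_of_mem hb) (mem_map_of_mem ht)

theorem map_corner_mul_pow_le (he : IsIdempotentElem e) (P : Submodule R A)
    {T : Submodule R A} (hT : ∀ t ∈ T, Commute e t) (n : ℕ) :
    map (corner R e) (P * T ^ n) ≤ map (corner R e) P * map (corner R e) T ^ n := by
  induction n with
  | zero => simp only [pow_zero, mul_one, le_refl]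
  | succ n ih =>
    calc map (corner R e) (P * T ^ (n + 1)) = map (corner R e) (P * T ^ n * T) := by
          rw [pow_succ, mul_assoc]
      _ ≤ map (corner R e) (P * T ^ n) * map (corner R e) T := map_corner_mul_le he _ hT
      _ ≤ map (corner R e) P * map (corner R e) T ^ n * map (corner R e) T :=
          mul_le_mul_left ih _
      _ = map (corner R e) P * map (corner R e) T ^ (n + 1) := by rw [pow_succ, mul_assoc]

variable {T : Submodule R A}

theorem span_mul_top_le_top_mul_span {G : Set A} (hG : ∀ g ∈ G, ∀ y, g * y ∈ ⊤ * span R G) :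
    span R G * ⊤ ≤ ⊤ * span R G := by
  conv_lhs => rw [← span_univ, span_mul_span]
  rw [span_le]
  rintro _ ⟨g, hg, y, -, rfl⟩
  exact hG g hg y

theorem pow_mul_top_le (hT : T * ⊤ ≤ ⊤ * T) (n : ℕ) : T ^ n * ⊤ ≤ ⊤ * T ^ n := by
  induction n with
  | zero => rw [pow_zero, one_mul, mul_one]
  | succ n ih =>
    calc T ^ (n + 1) * ⊤ = T ^ n * (T * ⊤) := by rw [pow_succ, mul_assoc]
      _ ≤ T ^ n * (⊤ * T) := mul_le_mul_right hT _
      _ = T ^ n * ⊤ * T := by rw [mul_assoc]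
      _ ≤ ⊤ * T ^ n * T := mul_le_mul_left ih _
      _ = ⊤ * T ^ (n + 1) := by rw [mul_assoc, pow_succ]

theorem top_mul_pow_le (hT : T * ⊤ ≤ ⊤ * T) (n : ℕ) : (⊤ * T) ^ n ≤ ⊤ * T ^ n := by
  induction n with
  | zero => rw [pow_zero, pow_zero, mul_one]; exact le_top
  | succ n ih =>
    calc (⊤ * T) ^ (n + 1) = (⊤ * T) ^ n * (⊤ * T) := pow_succ _ _
      _ ≤ ⊤ * T ^ n * (⊤ * T) := mul_le_mul_left ih _
      _ = ⊤ * (T ^ n * ⊤) * T := by simp only [mul_assoc]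
      _ ≤ ⊤ * (⊤ * T ^ n) * T := mul_le_mul_left (mul_le_mul_right (pow_mul_top_le hT n) _) _
      _ = ⊤ * ⊤ * T ^ (n + 1) := by rw [pow_succ]; simp only [mul_assoc]
      _ ≤ ⊤ * T ^ (n + 1) := mul_le_mul_left le_top _

theorem map_corner_pow_le_pow_map_corner (he : IsIdempotentElem e) (hTe : ∀ t ∈ T, Commute e t)
    (hT : T * ⊤ ≤ ⊤ * T) {n : ℕ} (hn : 0 < n) :
    map (corner R e) ((⊤ * T) ^ n) ≤ map (corner R e) (⊤ * T) ^ n := by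
  obtain ⟨k, rfl⟩ := Nat.exists_eq_add_one.mpr hn
  have hT_le : T ≤ ⊤ * T := (one_mul T).symm.le.trans (mul_le_mul_left le_top T)
  calc map (corner R e) ((⊤ * T) ^ (k + 1)) ≤ map (corner R e) (⊤ * T * T ^ k) := by
        rw [mul_assoc, ← pow_succ']; exact map_mono (top_mul_pow_le hT _)
    _ ≤ map (corner R e) (⊤ * T) * map (corner R e) T ^ k := map_corner_mul_pow_le he _ hTe k
    _ ≤ map (corner R e) (⊤ * T) * map (corner R e) (⊤ * T) ^ k := by gcongr
    _ = map (corner R e) (⊤ * T) ^ (k + 1) := (pow_succ' _ _).symm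

end Submodule

open Submodule

theorem stmt_18_general {H : Type*} [Ring H]
    (e : H) (he : e * e = e)
    (s m0 : ℕ) (p : Fin s → H) (x : Fin m0 → H)
    (hp_central : ∀ (j : Fin s) (y : H), p j * y = y * p j)
    (hx_comm : ∀ (i : Fin m0) (y : H),
      x i * y - y * x i ∈
        Submodule.span ℕ {z : H | ∃ (j : Fin s) (y' : H), z = p j * y'})
    (hxe : ∀ i : Fin m0, e * x i = x i * e)
    -- m : the left ideal generated by the p's and x's, assumed two-sided
    (M : Submodule ℕ H)
    (hMgen : M = Submodule.span ℕ
      {z : H | ∃ (y : H) (g : H),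
        ((∃ j : Fin s, g = p j) ∨ (∃ i : Fin m0, g = x i)) ∧ z = y * g}) :
    (∀ n : ℕ, 0 < n →
      (Submodule.map ((LinearMap.mulLeft ℕ e) ∘ₗ (LinearMap.mulRight ℕ e)) M) ^ n
        ≤ Submodule.map ((LinearMap.mulLeft ℕ e) ∘ₗ (LinearMap.mulRight ℕ e)) (M ^ n))
    ∧ (∀ n : ℕ, 0 < n → ∃ N : ℕ,
      Submodule.map ((LinearMap.mulLeft ℕ e) ∘ₗ (LinearMap.mulRight ℕ e)) (M ^ N)
        ≤ (Submodule.map ((LinearMap.mulLeft ℕ e) ∘ₗ (LinearMap.mulRight ℕ e)) M) ^ n) := by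
  set T := span ℕ {g : H | (∃ j, g = p j) ∨ ∃ i, g = x i}
  have hM : M = ⊤ * T := by
    rw [hMgen, ← span_univ, span_mul_span]
    congr 1
    ext z
    simp [Set.mem_mul, eq_comm]
  have hpT (j : Fin s) (y : H) : p j * y ∈ ⊤ * T :=
    hp_central j y ▸ mul_mem_mul mem_top (subset_span (Or.inl ⟨j, rfl⟩))
  have hTe : ∀ t ∈ T, Commute e t := by
    have hT_le : T ≤ Subalgebra.toSubmodule (Subalgebra.centralizer ℕ {e}) := by
      rw [span_le]
      rintro g (⟨j, rfl⟩ | ⟨i, rfl⟩) <;>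
        simp only [SetLike.mem_coe, Subalgebra.mem_toSubmodule, Subalgebra.mem_centralizer_iff,
          Set.mem_singleton_iff, forall_eq, hxe, hp_central]
    exact fun t ht => (Subalgebra.mem_centralizer_iff ℕ).mp (hT_le ht) e rfl
  have hT : T * ⊤ ≤ ⊤ * T := by
    refine span_mul_top_le_top_mul_span ?_
    rintro g (⟨j, rfl⟩ | ⟨i, rfl⟩) y
    · exact hpT j y
    · have hcomm : x i * y - y * x i ∈ ⊤ * T :=
        span_le.mpr (by rintro _ ⟨j, y', rfl⟩; exact hpT j y') (hx_comm i y)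
      rw [← sub_add_cancel (x i * y) (y * x i)]
      exact add_mem hcomm (mul_mem_mul mem_top (subset_span (Or.inr ⟨i, rfl⟩)))
  have hM_left (b : H) (hb : b ∈ ⊤ * T) : e * b ∈ ⊤ * T := by
    have heb := mul_mem_mul (mem_top : e ∈ ⊤) hb
    rw [← mul_assoc] at heb
    exact mul_le_mul_left le_top T heb
  subst hM
  exact ⟨fun n hn => pow_map_corner_le_map_corner_pow he hM_left hn,
    fun n hn => ⟨n, map_corner_pow_le_pow_map_corner he hTe hT hn⟩⟩

/-- Cofinality of the filtrations `{e mⁿ e}` and `{(e m e)ⁿ}` on the spherical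
subalgebra `eHe`: if `m` is a two-sided ideal of `H` generated as a left ideal by
central elements `p_j` together with elements `x_i` commuting with `e` and whose
commutators with `H` lie in `(p_1,…,p_s)H`, then `(e m e)ⁿ ⊆ e mⁿ e` and for every
`n` there is `N` with `e m^N e ⊆ (e m e)ⁿ`. -/
theorem stmt_18 {H : Type*} [Ring H]
    -- increasing exhaustive filtration on H, with e of degree 0
    (F : ℕ → Submodule ℕ H) (hFmono : Monotone F) (hFexh : (⨆ n, F n) = ⊤)
    (e : H) (he : e * e = e) (heF : e ∈ F 0)
    (s m0 : ℕ) (p : Fin s → H) (x : Fin m0 → H)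
    (hp_central : ∀ (j : Fin s) (y : H), p j * y = y * p j)
    (hx_comm : ∀ (i : Fin m0) (y : H),
      x i * y - y * x i ∈
        Submodule.span ℕ {z : H | ∃ (j : Fin s) (y' : H), z = p j * y'})
    (hxe : ∀ i : Fin m0, e * x i = x i * e)
    -- m : the left ideal generated by the p's and x's, assumed two-sided
    (M : Submodule ℕ H)
    (hMgen : M = Submodule.span ℕ
      {z : H | ∃ (y : H) (g : H),
        ((∃ j : Fin s, g = p j) ∨ (∃ i : Fin m0, g = x i)) ∧ z = y * g})
    (hM_twosided : ∀ a ∈ M, ∀ y : H, a * y ∈ M) :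
    (∀ n : ℕ, 0 < n →
      (Submodule.map ((LinearMap.mulLeft ℕ e) ∘ₗ (LinearMap.mulRight ℕ e)) M) ^ n
        ≤ Submodule.map ((LinearMap.mulLeft ℕ e) ∘ₗ (LinearMap.mulRight ℕ e)) (M ^ n))
    ∧ (∀ n : ℕ, 0 < n → ∃ N : ℕ,
      Submodule.map ((LinearMap.mulLeft ℕ e) ∘ₗ (LinearMap.mulRight ℕ e)) (M ^ N)
        ≤ (Submodule.map ((LinearMap.mulLeft ℕ e) ∘ₗ (LinearMap.mulRight ℕ e)) M) ^ n) :=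
  stmt_18_general e he s m0 p x hp_central hx_comm hxe M hMgen
end
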